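/- Gradients of unmodified layers agree after lifting: Assume the loss ℓ and the activation σ are differentiable. Given data S, a fully-connected NN, a one-layer deeper NN′, a parameter θ of NN, and any θ′ ∈ T_S(θ), for every original layer index l ∈ [L] with l ∉ {q̂, q+1}, the gradients of the empirical risk agree: ∇_{W′^[l]} R_S(θ′) = ∇_{W^[l]} R_S(θ) and ∇_{b′^[l]} R_S(θ′) = ∇_{b^[l]} R_S(θ); in particular this includes layer l = q. -/
import Mathlib


/-!
Common formalization of fully-connected neural networks, one-layer deeper
networks, and the critical lifting operator from
"Embedding Principle in Depth for the Loss Landscape Analysis of Deep Neural Networks".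

Vectors are modelled as functions `ℕ → ℝ` (coordinates beyond the layer width
are irrelevant and feature vectors are zero-padded there); parameters assign to
each layer index `l ≥ 1` a weight "matrix" `ℕ → ℕ → ℝ` and a bias `ℕ → ℝ`.
-/

/-- Parameters of a network: for each layer `l ≥ 1` a weight matrix and a bias. -/
abbrev NNParams : Type := ℕ → (ℕ → ℕ → ℝ) × (ℕ → ℝ)

/-- Feature vectors `f^[l]_θ(x)`: `f^[0]_θ(x) = x` (truncated to the input width),
`f^[l]_θ(x) = σ(W^[l] f^[l-1]_θ(x) + b^[l])` for `1 ≤ l ≤ L-1`, and no activation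
at the output layer `L`.  Coordinates outside the layer width are `0`. -/
noncomputable def feat (σ : ℝ → ℝ) (m : ℕ → ℕ) (L : ℕ) (θ : NNParams) (x : ℕ → ℝ) :
    ℕ → ℕ → ℝ
  | 0 => fun i => if i < m 0 then x i else 0
  | l + 1 => fun i =>
      if i < m (l + 1) then
        (if l + 1 = L then id else σ)
          ((∑ j ∈ Finset.range (m l), (θ (l + 1)).1 i j * feat σ m L θ x l j)
            + (θ (l + 1)).2 i)
      else 0

/-- Output `f_θ(x) = W^[L] f^[L-1]_θ(x) + b^[L]` of the network. -/
noncomputable def nnOut (σ : ℝ → ℝ) (m : ℕ → ℕ) (L : ℕ) (θ : NNParams) (x : ℕ → ℝ) :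
    ℕ → ℝ :=
  feat σ m L θ x L

/-- Pre-activation of layer `l ≥ 1`: `W^[l] f^[l-1]_θ(x) + b^[l]`. -/
noncomputable def preAct (σ : ℝ → ℝ) (m : ℕ → ℕ) (L : ℕ) (θ : NNParams) (x : ℕ → ℝ)
    (l i : ℕ) : ℝ :=
  (∑ j ∈ Finset.range (m (l - 1)), (θ l).1 i j * feat σ m L θ x (l - 1) j) + (θ l).2 i

/-- `(a,b)` is an affine subdomain of `σ` with slope `lam ≠ 0` and intercept `mu`. -/
def AffineSubdomain (σ : ℝ → ℝ) (a b lam mu : ℝ) : Prop :=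
  a < b ∧ lam ≠ 0 ∧ ∀ t ∈ Set.Ioo a b, σ t = lam * t + mu

/-- Widths of the one-layer deeper network obtained by inserting a hidden layer of
width `mh` between layers `q` and `q+1` (the inserted layer gets index `q+1` and
all later layers are shifted up by one). -/
def insertWidth (m : ℕ → ℕ) (q mh : ℕ) : ℕ → ℕ :=
  fun l => if l ≤ q then m l else if l = q + 1 then mh else m (l - 1)

/-- Local-in-layer condition: all layers of the deeper network other than the inserted
layer (deep index `q+1`) and the following layer (deep index `q+2`) are inherited
from the shallow network. -/
def LocalInLayer (m : ℕ → ℕ) (L q : ℕ) (θ θ' : NNParams) : Prop :=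
  (∀ l, 1 ≤ l → l ≤ q →
    (∀ i < m l, ∀ j < m (l - 1), (θ' l).1 i j = (θ l).1 i j) ∧
    (∀ i < m l, (θ' l).2 i = (θ l).2 i)) ∧
  (∀ l, q + 3 ≤ l → l ≤ L + 1 →
    (∀ i < m (l - 1), ∀ j < m (l - 2), (θ' l).1 i j = (θ (l - 1)).1 i j) ∧
    (∀ i < m (l - 1), (θ' l).2 i = (θ (l - 1)).2 i))

/-- Output preserving condition:
`W'^[q+1] diag(λ) W'^[q̂] = W^[q+1]` and
`W'^[q+1] diag(λ) b'^[q̂] + W'^[q+1] μ + b'^[q+1] = b^[q+1]`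
(in deep indexing, `W'^[q̂] = (θ' (q+1)).1` and `W'^[q+1] = (θ' (q+2)).1`). -/
def OutputPres (m : ℕ → ℕ) (q mh : ℕ) (θ θ' : NNParams) (lam mu : ℕ → ℝ) : Prop :=
  (∀ i < m (q + 1), ∀ k < m q,
    (∑ j ∈ Finset.range mh, (θ' (q + 2)).1 i j * (lam j * (θ' (q + 1)).1 j k))
      = (θ (q + 1)).1 i k) ∧
  (∀ i < m (q + 1),
    (∑ j ∈ Finset.range mh, (θ' (q + 2)).1 i j * (lam j * (θ' (q + 1)).2 j + mu j))
      + (θ' (q + 2)).2 i = (θ (q + 1)).2 i)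

/-- `θ'` is a one-layer lifting of `θ` with explicit slope/intercept vectors
`lam, mu` and affine subdomains `(aa j, bb j)`: the local-in-layer, layer
linearization and output preserving conditions. -/
def LiftWitness (σ : ℝ → ℝ) (m : ℕ → ℕ) (L q mh : ℕ) {n : ℕ}
    (S : Fin n → (ℕ → ℝ) × (ℕ → ℝ)) (θ θ' : NNParams) (lam mu aa bb : ℕ → ℝ) : Prop :=
  LocalInLayer m L q θ θ' ∧
  (∀ j < mh, AffineSubdomain σ (aa j) (bb j) (lam j) (mu j) ∧
    ∀ i : Fin n,
      preAct σ (insertWidth m q mh) (L + 1) θ' (S i).1 (q + 1) j ∈ Set.Ioo (aa j) (bb j)) ∧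
  OutputPres m q mh θ θ' lam mu

/-- The one-layer lifting operator `T_S(θ)`: the set of all parameters of the
one-layer deeper network satisfying the local-in-layer, layer linearization and
output preserving conditions. -/
def liftSet (σ : ℝ → ℝ) (m : ℕ → ℕ) (L q mh : ℕ) {n : ℕ}
    (S : Fin n → (ℕ → ℝ) × (ℕ → ℝ)) (θ : NNParams) : Set NNParams :=
  { θ' | ∃ lam mu aa bb : ℕ → ℝ, LiftWitness σ m L q mh S θ θ' lam mu aa bb }

/-- Empirical risk `R_S(θ) = (1/n) ∑ᵢ ℓ(f_θ(xᵢ), yᵢ)`. -/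
noncomputable def empRisk (σ : ℝ → ℝ) (ℓ : (ℕ → ℝ) → (ℕ → ℝ) → ℝ) (m : ℕ → ℕ) (L : ℕ)
    {n : ℕ} (S : Fin n → (ℕ → ℝ) × (ℕ → ℝ)) (θ : NNParams) : ℝ :=
  (1 / (n : ℝ)) * ∑ i : Fin n, ℓ (nnOut σ m L θ (S i).1) (S i).2

/-- Update a single weight entry `W^[l]_{ij}` of the parameters. -/
def updW (θ : NNParams) (l i j : ℕ) (t : ℝ) : NNParams :=
  fun l' => if l' = l then
    ((fun i' j' => if i' = i ∧ j' = j then t else (θ l).1 i' j'), (θ l).2)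
  else θ l'

/-- Update a single bias entry `b^[l]_i` of the parameters. -/
def updB (θ : NNParams) (l i : ℕ) (t : ℝ) : NNParams :=
  fun l' => if l' = l then
    ((θ l).1, fun i' => if i' = i then t else (θ l).2 i')
  else θ l'

/-- `θ` is a critical point of the empirical risk: all partial derivatives with
respect to the weight and bias entries of all layers vanish. -/
def IsCriticalPt (σ : ℝ → ℝ) (ℓ : (ℕ → ℝ) → (ℕ → ℝ) → ℝ) (m : ℕ → ℕ) (L : ℕ)
    {n : ℕ} (S : Fin n → (ℕ → ℝ) × (ℕ → ℝ)) (θ : NNParams) : Prop :=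
  ∀ l, 1 ≤ l → l ≤ L →
    (∀ i < m l, ∀ j < m (l - 1),
      deriv (fun t => empRisk σ ℓ m L S (updW θ l i j t)) ((θ l).1 i j) = 0) ∧
    (∀ i < m l,
      deriv (fun t => empRisk σ ℓ m L S (updB θ l i t)) ((θ l).2 i) = 0)

/-- Feature gradients `g^[l]_θ(x)`: `g^[L] = 1` and `g^[l] = σ'(W^[l] f^[l-1] + b^[l])`
for `l ≤ L-1`; coordinates outside the layer width are `0`. -/
noncomputable def featGrad (σ : ℝ → ℝ) (m : ℕ → ℕ) (L : ℕ) (θ : NNParams) (x : ℕ → ℝ)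
    (l i : ℕ) : ℝ :=
  if i < m l then (if l = L then 1 else deriv σ (preAct σ m L θ x l i)) else 0

/-- Auxiliary downward recursion for error vectors: `errVecAux … k = z^[L-k]`. -/
noncomputable def errVecAux (σ : ℝ → ℝ) (ℓ : (ℕ → ℝ) → (ℕ → ℝ) → ℝ) (m : ℕ → ℕ) (L : ℕ)
    (θ : NNParams) (x y : ℕ → ℝ) : ℕ → ℕ → ℝ
  | 0 => fun i =>
      if i < m L then
        deriv (fun t => ℓ (Function.update (nnOut σ m L θ x) i t) y) (nnOut σ m L θ x i)
      else 0
  | k + 1 => fun i =>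
      if i < m (L - (k + 1)) then
        ∑ p ∈ Finset.range (m (L - k)),
          (θ (L - k)).1 p i * (errVecAux σ ℓ m L θ x y k p * featGrad σ m L θ x (L - k) p)
      else 0

/-- Error vectors `z^[l]_θ(x)`: `z^[L] = ∇_f ℓ(f_θ(x), y)` and
`z^[l] = (W^[l+1])ᵀ (z^[l+1] ∘ g^[l+1])`. -/
noncomputable def errVec (σ : ℝ → ℝ) (ℓ : (ℕ → ℝ) → (ℕ → ℝ) → ℝ) (m : ℕ → ℕ) (L : ℕ)
    (θ : NNParams) (x y : ℕ → ℝ) (l : ℕ) : ℕ → ℝ :=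
  errVecAux σ ℓ m L θ x y (L - l)

/-- A list of insertion positions/widths `(q, mh)` describes a valid chain of
one-layer-deeper insertions starting from widths `m` and depth `L`. -/
def ValidChain (m : ℕ → ℕ) (L : ℕ) : List (ℕ × ℕ) → Prop
  | [] => True
  | (q, mh) :: rest =>
      1 ≤ q ∧ q + 1 ≤ L ∧ min (m q) (m (q + 1)) ≤ mh ∧
        ValidChain (insertWidth m q mh) (L + 1) rest

/-- The widths obtained after performing a chain of insertions. -/
def chainWidths (m : ℕ → ℕ) : List (ℕ × ℕ) → (ℕ → ℕ)
  | [] => m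
  | (q, mh) :: rest => chainWidths (insertWidth m q mh) rest

/-- Multi-layer lifting: the composition of the one-layer liftings along a chain of
insertions. -/
def liftChain (σ : ℝ → ℝ) {n : ℕ} (S : Fin n → (ℕ → ℝ) × (ℕ → ℝ)) :
    (ℕ → ℕ) → ℕ → List (ℕ × ℕ) → NNParams → Set NNParams
  | _, _, [], θ => {θ}
  | m, L, (q, mh) :: rest, θ =>
      {θ'' | ∃ θ', θ' ∈ liftSet σ m L q mh S θ ∧
        θ'' ∈ liftChain σ S (insertWidth m q mh) (L + 1) rest θ'}

/-- `NN'` (widths `m'`, depth `L + J`) is `J`-layer deeper than `NN` (widths `m`,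
depth `L`): it is obtained by `J` successive one-layer insertions, each inserted
layer having width at least the minimum of the widths of its neighboring layers. -/
def JDeeper : ℕ → (ℕ → ℕ) → ℕ → (ℕ → ℕ) → Prop
  | 0, m, L, m' => ∀ l ≤ L, m' l = m l
  | J + 1, m, L, m' =>
      ∃ mmid, JDeeper J m L mmid ∧
        ∃ q mh, 1 ≤ q ∧ q + 1 ≤ L + J ∧ min (mmid q) (mmid (q + 1)) ≤ mh ∧
          ∀ l ≤ L + J + 1, m' l = insertWidth mmid q mh l

open Finset in
lemma insertWidth_of_le {m : ℕ → ℕ} {q mh l : ℕ} (h : l ≤ q) :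
    insertWidth m q mh l = m l := if_pos h

lemma insertWidth_self {m : ℕ → ℕ} {q mh : ℕ} (hq : 1 ≤ q) :
    insertWidth m q mh (q+1) = mh := by
  unfold insertWidth; rw [if_neg (by omega), if_pos rfl]

lemma insertWidth_of_gt {m : ℕ → ℕ} {q mh l : ℕ} (h : q + 2 ≤ l) :
    insertWidth m q mh l = m (l - 1) := by
  unfold insertWidth; rw [if_neg (by omega), if_neg (by omega)]

lemma updW_base (θ : NNParams) (l i j : ℕ) : updW θ l i j ((θ l).1 i j) = θ := by
  funext l'
  unfold updW
  split
  · next h =>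
    subst h
    refine Prod.ext ?_ rfl
    funext i' j'
    dsimp only
    split
    · next h2 => rw [h2.1, h2.2]
    · rfl
  · rfl

lemma updB_base (θ : NNParams) (l i : ℕ) : updB θ l i ((θ l).2 i) = θ := by
  funext l'
  unfold updB
  split
  · next h =>
    subst h
    refine Prod.ext rfl ?_
    funext i'
    dsimp only
    split
    · next h2 => rw [h2]
    · rfl
  · rfl

lemma feat_continuous (σ : ℝ → ℝ) (hσ : Continuous σ) (mm : ℕ → ℕ) (LL : ℕ)
    (P : ℝ → NNParams)
    (hP1 : ∀ l i j, Continuous fun t => (P t l).1 i j)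
    (hP2 : ∀ l i, Continuous fun t => (P t l).2 i)
    (x : ℕ → ℝ) : ∀ l i, Continuous fun t => feat σ mm LL (P t) x l i := by
  intro l
  induction l with
  | zero => intro i; simp only [feat]; exact continuous_const
  | succ l ih =>
    intro i
    simp only [feat]
    split
    · have hF : Continuous (if l + 1 = LL then (id : ℝ → ℝ) else σ) := by
        split; exacts [continuous_id, hσ]
      exact hF.comp <| Continuous.add
        (continuous_finset_sum _ fun j _ => (hP1 _ _ _).mul (ih j)) (hP2 _ _)
    · exact continuous_const

lemma preAct_continuous (σ : ℝ → ℝ) (hσ : Continuous σ) (mm : ℕ → ℕ) (LL : ℕ)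
    (P : ℝ → NNParams)
    (hP1 : ∀ l i j, Continuous fun t => (P t l).1 i j)
    (hP2 : ∀ l i, Continuous fun t => (P t l).2 i)
    (x : ℕ → ℝ) (l i : ℕ) : Continuous fun t => preAct σ mm LL (P t) x l i := by
  unfold preAct
  exact Continuous.add
    (continuous_finset_sum _ fun j _ => (hP1 _ _ _).mul
      (feat_continuous σ hσ mm LL P hP1 hP2 x _ j)) (hP2 _ _)

lemma updW_cont1 (θ : NNParams) (l0 i0 j0 : ℕ) :
    ∀ l i j, Continuous fun t => ((updW θ l0 i0 j0 t l).1 i j : ℝ) := by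
  intro l i j
  unfold updW
  split
  · simp only
    split
    · exact continuous_id
    · exact continuous_const
  · exact continuous_const

lemma updW_cont2 (θ : NNParams) (l0 i0 j0 : ℕ) :
    ∀ l i, Continuous fun t => ((updW θ l0 i0 j0 t l).2 i : ℝ) := by
  intro l i; unfold updW; split <;> exact continuous_const

lemma updB_cont1 (θ : NNParams) (l0 i0 : ℕ) :
    ∀ l i j, Continuous fun t => ((updB θ l0 i0 t l).1 i j : ℝ) := by
  intro l i j; unfold updB; split <;> exact continuous_const

lemma updB_cont2 (θ : NNParams) (l0 i0 : ℕ) :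
    ∀ l i, Continuous fun t => ((updB θ l0 i0 t l).2 i : ℝ) := by
  intro l i
  unfold updB
  split
  · simp only
    split
    · exact continuous_id
    · exact continuous_const
  · exact continuous_const
lemma feat_succ (σ : ℝ → ℝ) (m : ℕ → ℕ) (L : ℕ) (θ : NNParams) (x : ℕ → ℝ) (l i : ℕ) :
    feat σ m L θ x (l + 1) i =
      if i < m (l + 1) then
        (if l + 1 = L then id else σ)
          ((∑ j ∈ Finset.range (m l), (θ (l + 1)).1 i j * feat σ m L θ x l j)
            + (θ (l + 1)).2 i)
      else 0 := by
  simp only [feat]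

lemma featLow (σ : ℝ → ℝ) (m : ℕ → ℕ) (L q mh : ℕ) (hqL : q + 1 ≤ L)
    (θd θs : NNParams) (x : ℕ → ℝ)
    (hlow : ∀ l, 1 ≤ l → l ≤ q →
      (∀ i < m l, ∀ j < m (l - 1), (θd l).1 i j = (θs l).1 i j) ∧
      (∀ i < m l, (θd l).2 i = (θs l).2 i)) :
    ∀ l ≤ q, feat σ (insertWidth m q mh) (L + 1) θd x l = feat σ m L θs x l := by
  intro l
  induction l with
  | zero =>
    intro _
    funext i
    simp only [feat, insertWidth_of_le (Nat.zero_le q)]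
  | succ l ih =>
    intro hl
    have ihl := ih (by omega)
    funext i
    rw [feat_succ σ (insertWidth m q mh) (L + 1) θd x l i, feat_succ σ m L θs x l i]
    rw [insertWidth_of_le hl, insertWidth_of_le (by omega : l ≤ q),
        if_neg (by omega : ¬ l + 1 = L + 1), if_neg (by omega : ¬ l + 1 = L), ihl]
    by_cases hi : i < m (l + 1)
    · rw [if_pos hi, if_pos hi]
      congr 1
      congr 1
      · exact Finset.sum_congr rfl fun j hj =>
          by rw [(hlow (l+1) (by omega) hl).1 i hi j (Finset.mem_range.mp hj)]
      · exact (hlow (l+1) (by omega) hl).2 i hi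
    · rw [if_neg hi, if_neg hi]

lemma featMid (σ : ℝ → ℝ) (m : ℕ → ℕ) (L q mh : ℕ) (hq : 1 ≤ q) (hqL : q + 1 ≤ L)
    (θd θs : NNParams) (x : ℕ → ℝ) (lam mu aa bb : ℕ → ℝ)
    (haff : ∀ j < mh, AffineSubdomain σ (aa j) (bb j) (lam j) (mu j))
    (hpre : ∀ j < mh,
      preAct σ (insertWidth m q mh) (L + 1) θd x (q + 1) j ∈ Set.Ioo (aa j) (bb j))
    (hout : OutputPres m q mh θs θd lam mu)
    (hfq : feat σ (insertWidth m q mh) (L + 1) θd x q = feat σ m L θs x q) :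
    feat σ (insertWidth m q mh) (L + 1) θd x (q + 2) = feat σ m L θs x (q + 1) := by
  have hout1 : ∀ i < m (q + 1), ∀ k < m q,
      (∑ j ∈ Finset.range mh, (θd (q + 1 + 1)).1 i j * (lam j * (θd (q + 1)).1 j k))
        = (θs (q + 1)).1 i k := hout.1
  have hout2 : ∀ i < m (q + 1),
      (∑ j ∈ Finset.range mh, (θd (q + 1 + 1)).1 i j * (lam j * (θd (q + 1)).2 j + mu j))
        + (θd (q + 1 + 1)).2 i = (θs (q + 1)).2 i := hout.2
  have hfq1 : ∀ j < mh,
      feat σ (insertWidth m q mh) (L + 1) θd x (q + 1) j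
        = lam j * preAct σ (insertWidth m q mh) (L + 1) θd x (q + 1) j + mu j := by
    intro j hj
    have h1 : feat σ (insertWidth m q mh) (L + 1) θd x (q + 1) j
        = σ (preAct σ (insertWidth m q mh) (L + 1) θd x (q + 1) j) := by
      rw [feat_succ σ (insertWidth m q mh) (L + 1) θd x q j]
      simp only [preAct, Nat.add_sub_cancel]
      rw [insertWidth_self hq, if_pos hj, if_neg (by omega : ¬ q + 1 = L + 1)]
    rw [h1, (haff j hj).2.2 _ (hpre j hj)]
  funext i
  show feat σ (insertWidth m q mh) (L + 1) θd x (q + 1 + 1) i = feat σ m L θs x (q + 1) i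
  rw [feat_succ σ (insertWidth m q mh) (L + 1) θd x (q + 1) i, feat_succ σ m L θs x q i]
  rw [insertWidth_of_gt (by omega : q + 2 ≤ q + 1 + 1), insertWidth_self hq]
  simp only [Nat.add_sub_cancel]
  by_cases hi : i < m (q + 1)
  · rw [if_pos hi, if_pos hi]
    have hact : (if q + 1 + 1 = L + 1 then (id : ℝ → ℝ) else σ)
        = (if q + 1 = L then id else σ) := by
      rcases eq_or_ne (q + 1) L with hE | hE
      · rw [if_pos (by omega), if_pos hE]
      · rw [if_neg (by omega), if_neg hE]
    rw [hact]
    have hP : ∀ j ∈ Finset.range mh,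
        (θd (q + 1 + 1)).1 i j * feat σ (insertWidth m q mh) (L + 1) θd x (q + 1) j
        = (∑ k ∈ Finset.range (m q),
            ((θd (q + 1 + 1)).1 i j * (lam j * (θd (q + 1)).1 j k)) * feat σ m L θs x q k)
          + (θd (q + 1 + 1)).1 i j * (lam j * (θd (q + 1)).2 j + mu j) := by
      intro j hj
      rw [hfq1 j (Finset.mem_range.mp hj)]
      have hPA : preAct σ (insertWidth m q mh) (L + 1) θd x (q + 1) j
          = (∑ k ∈ Finset.range (m q), (θd (q + 1)).1 j k * feat σ m L θs x q k)
            + (θd (q + 1)).2 j := by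
        simp only [preAct, Nat.add_sub_cancel, insertWidth_of_le (le_refl q), hfq]
      have Ssum : (∑ k ∈ Finset.range (m q),
            ((θd (q + 1 + 1)).1 i j * (lam j * (θd (q + 1)).1 j k)) * feat σ m L θs x q k)
          = (θd (q + 1 + 1)).1 i j *
              (lam j * ∑ k ∈ Finset.range (m q), (θd (q + 1)).1 j k * feat σ m L θs x q k) := by
        rw [Finset.mul_sum, Finset.mul_sum]
        exact Finset.sum_congr rfl fun k _ => by ring
      rw [hPA, Ssum]
      ring
    have harg : (∑ j ∈ Finset.range mh,
          (θd (q + 1 + 1)).1 i j * feat σ (insertWidth m q mh) (L + 1) θd x (q + 1) j)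
          + (θd (q + 1 + 1)).2 i
        = (∑ j ∈ Finset.range (m q), (θs (q + 1)).1 i j * feat σ m L θs x q j)
          + (θs (q + 1)).2 i := by
      rw [Finset.sum_congr rfl hP, Finset.sum_add_distrib, Finset.sum_comm,
          add_assoc, hout2 i hi]
      congr 1
      exact Finset.sum_congr rfl fun k hk => by
        rw [← Finset.sum_mul, hout1 i hi k (Finset.mem_range.mp hk)]
    rw [harg]
  · rw [if_neg hi, if_neg hi]

lemma featHigh (σ : ℝ → ℝ) (m : ℕ → ℕ) (L q mh : ℕ) (hq : 1 ≤ q) (hqL : q + 1 ≤ L)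
    (θd θs : NNParams) (x : ℕ → ℝ) (lam mu aa bb : ℕ → ℝ)
    (haff : ∀ j < mh, AffineSubdomain σ (aa j) (bb j) (lam j) (mu j))
    (hpre : ∀ j < mh,
      preAct σ (insertWidth m q mh) (L + 1) θd x (q + 1) j ∈ Set.Ioo (aa j) (bb j))
    (hout : OutputPres m q mh θs θd lam mu)
    (hlow : ∀ l, 1 ≤ l → l ≤ q →
      (∀ i < m l, ∀ j < m (l - 1), (θd l).1 i j = (θs l).1 i j) ∧
      (∀ i < m l, (θd l).2 i = (θs l).2 i))
    (hhigh : ∀ l, q + 3 ≤ l → l ≤ L + 1 →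
      (∀ i < m (l - 1), ∀ j < m (l - 2), (θd l).1 i j = (θs (l - 1)).1 i j) ∧
      (∀ i < m (l - 1), (θd l).2 i = (θs (l - 1)).2 i)) :
    ∀ l, q + 1 ≤ l → l ≤ L →
      feat σ (insertWidth m q mh) (L + 1) θd x (l + 1) = feat σ m L θs x l := by
  intro l hl
  induction l, hl using Nat.le_induction with
  | base =>
    intro _
    exact featMid σ m L q mh hq hqL θd θs x lam mu aa bb haff hpre hout
      (featLow σ m L q mh hqL θd θs x hlow q le_rfl)
  | succ l hl ih =>
    intro hlL
    have ihl := ih (by omega)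
    funext i
    rw [feat_succ σ (insertWidth m q mh) (L + 1) θd x (l + 1) i, feat_succ σ m L θs x l i]
    rw [insertWidth_of_gt (by omega : q + 2 ≤ l + 1 + 1),
        insertWidth_of_gt (by omega : q + 2 ≤ l + 1)]
    simp only [Nat.add_sub_cancel]
    rw [ihl]
    by_cases hi : i < m (l + 1)
    · rw [if_pos hi, if_pos hi]
      have hact : (if l + 1 + 1 = L + 1 then (id : ℝ → ℝ) else σ)
          = (if l + 1 = L then id else σ) := by
        rcases eq_or_ne (l + 1) L with hE | hE
        · rw [if_pos (by omega), if_pos hE]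
        · rw [if_neg (by omega), if_neg hE]
      rw [hact]
      have h2 := hhigh (l + 1 + 1) (by omega) (by omega)
      have hW : ∀ j < m l, (θd (l + 1 + 1)).1 i j = (θs (l + 1)).1 i j :=
        fun j hj => h2.1 i hi j hj
      have hB : (θd (l + 1 + 1)).2 i = (θs (l + 1)).2 i := h2.2 i hi
      have hsum : (∑ j ∈ Finset.range (m l), (θd (l + 1 + 1)).1 i j * feat σ m L θs x l j)
          = ∑ j ∈ Finset.range (m l), (θs (l + 1)).1 i j * feat σ m L θs x l j :=
        Finset.sum_congr rfl fun j hj => by rw [hW j (Finset.mem_range.mp hj)]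
      rw [hsum, hB]
    · rw [if_neg hi, if_neg hi]

lemma nnOut_lift_eq (σ : ℝ → ℝ) (m : ℕ → ℕ) (L q mh : ℕ) (hq : 1 ≤ q) (hqL : q + 1 ≤ L)
    (θd θs : NNParams) (x : ℕ → ℝ) (lam mu aa bb : ℕ → ℝ)
    (haff : ∀ j < mh, AffineSubdomain σ (aa j) (bb j) (lam j) (mu j))
    (hpre : ∀ j < mh,
      preAct σ (insertWidth m q mh) (L + 1) θd x (q + 1) j ∈ Set.Ioo (aa j) (bb j))
    (hout : OutputPres m q mh θs θd lam mu)
    (hlow : ∀ l, 1 ≤ l → l ≤ q →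
      (∀ i < m l, ∀ j < m (l - 1), (θd l).1 i j = (θs l).1 i j) ∧
      (∀ i < m l, (θd l).2 i = (θs l).2 i))
    (hhigh : ∀ l, q + 3 ≤ l → l ≤ L + 1 →
      (∀ i < m (l - 1), ∀ j < m (l - 2), (θd l).1 i j = (θs (l - 1)).1 i j) ∧
      (∀ i < m (l - 1), (θd l).2 i = (θs (l - 1)).2 i)) :
    nnOut σ (insertWidth m q mh) (L + 1) θd x = nnOut σ m L θs x :=
  featHigh σ m L q mh hq hqL θd θs x lam mu aa bb haff hpre hout hlow hhigh L (by omega) le_rfl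
lemma key_deriv (σ : ℝ → ℝ) (hσ : Continuous σ)
    (ℓ : (ℕ → ℝ) → (ℕ → ℝ) → ℝ) (m : ℕ → ℕ) (L q mh : ℕ)
    (hq : 1 ≤ q) (hqL : q + 1 ≤ L)
    {n : ℕ} (S : Fin n → (ℕ → ℝ) × (ℕ → ℝ)) (θ' : NNParams)
    (lam mu aa bb : ℕ → ℝ)
    (haff : ∀ j < mh, AffineSubdomain σ (aa j) (bb j) (lam j) (mu j))
    (hpre' : ∀ j < mh, ∀ i : Fin n,
      preAct σ (insertWidth m q mh) (L + 1) θ' (S i).1 (q + 1) j ∈ Set.Ioo (aa j) (bb j))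
    (P Q : ℝ → NNParams) (t₀ : ℝ)
    (hP1 : ∀ l i j, Continuous fun t => (P t l).1 i j)
    (hP2 : ∀ l i, Continuous fun t => (P t l).2 i)
    (hP0 : P t₀ = θ')
    (hlow : ∀ t, ∀ l, 1 ≤ l → l ≤ q →
      (∀ i < m l, ∀ j < m (l - 1), (P t l).1 i j = (Q t l).1 i j) ∧
      (∀ i < m l, (P t l).2 i = (Q t l).2 i))
    (hout : ∀ t, OutputPres m q mh (Q t) (P t) lam mu)
    (hhigh : ∀ t, ∀ l, q + 3 ≤ l → l ≤ L + 1 →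
      (∀ i < m (l - 1), ∀ j < m (l - 2), (P t l).1 i j = (Q t (l - 1)).1 i j) ∧
      (∀ i < m (l - 1), (P t l).2 i = (Q t (l - 1)).2 i)) :
    deriv (fun t => empRisk σ ℓ (insertWidth m q mh) (L + 1) S (P t)) t₀
      = deriv (fun t => empRisk σ ℓ m L S (Q t)) t₀ := by
  apply Filter.EventuallyEq.deriv_eq
  have hev : ∀ᶠ t in nhds t₀, ∀ i : Fin n, ∀ j ∈ Finset.range mh,
      preAct σ (insertWidth m q mh) (L + 1) (P t) (S i).1 (q + 1) j
        ∈ Set.Ioo (aa j) (bb j) := by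
    rw [Filter.eventually_all]
    intro i
    rw [Filter.eventually_all_finset]
    intro j hj
    have hc : Continuous fun t =>
        preAct σ (insertWidth m q mh) (L + 1) (P t) (S i).1 (q + 1) j :=
      preAct_continuous σ hσ _ _ P hP1 hP2 _ _ _
    have hmem : preAct σ (insertWidth m q mh) (L + 1) (P t₀) (S i).1 (q + 1) j
        ∈ Set.Ioo (aa j) (bb j) := by
      rw [hP0]; exact hpre' j (Finset.mem_range.mp hj) i
    exact hc.continuousAt.preimage_mem_nhds (isOpen_Ioo.mem_nhds hmem)
  filter_upwards [hev] with t ht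
  unfold empRisk
  congr 1
  apply Finset.sum_congr rfl
  intro i _
  rw [nnOut_lift_eq σ m L q mh hq hqL (P t) (Q t) (S i).1 lam mu aa bb haff
      (fun j hj => ht i j (Finset.mem_range.mpr hj)) (hout t) (hlow t) (hhigh t)]
lemma updW_ne (θ : NNParams) (l i j : ℕ) (t : ℝ) (l' : ℕ) (h : l' ≠ l) :
    updW θ l i j t l' = θ l' := if_neg h

lemma updB_ne (θ : NNParams) (l i : ℕ) (t : ℝ) (l' : ℕ) (h : l' ≠ l) :
    updB θ l i t l' = θ l' := if_neg h
/-- **Gradients of unmodified layers agree after lifting.**  Assume `ℓ` and `σ` are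
differentiable.  For any `θ' ∈ T_S(θ)` and every original layer `l ∈ [L]` other
than the inserted layer `q̂` and the modified layer `q+1` (deep indices `l` for
`l ≤ q` and `l+1` for `l ≥ q+2`, i.e. deep layers `[1..q] ∪ [q+3..L+1]`), the
partial derivatives of the empirical risk with respect to the weights and biases
of that layer agree between the deep and the shallow network. -/
theorem gradients_of_unmodified_layers_agree
    (σ : ℝ → ℝ) (ℓ : (ℕ → ℝ) → (ℕ → ℝ) → ℝ) (m : ℕ → ℕ) (L q mh : ℕ)
    (hq : 1 ≤ q) (hqL : q + 1 ≤ L)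
    (hmh : min (m q) (m (q + 1)) ≤ mh)
    (hσ : Differentiable ℝ σ)
    (hℓ : ∀ (y v : ℕ → ℝ) (i : ℕ), Differentiable ℝ fun t => ℓ (Function.update v i t) y)
    {n : ℕ} (S : Fin n → (ℕ → ℝ) × (ℕ → ℝ)) (θ θ' : NNParams)
    (hθ' : θ' ∈ liftSet σ m L q mh S θ) :
    (∀ l, 1 ≤ l → l ≤ q →
      (∀ i < m l, ∀ j < m (l - 1),
        deriv (fun t => empRisk σ ℓ (insertWidth m q mh) (L + 1) S (updW θ' l i j t))
            ((θ' l).1 i j)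
          = deriv (fun t => empRisk σ ℓ m L S (updW θ l i j t)) ((θ l).1 i j)) ∧
      (∀ i < m l,
        deriv (fun t => empRisk σ ℓ (insertWidth m q mh) (L + 1) S (updB θ' l i t))
            ((θ' l).2 i)
          = deriv (fun t => empRisk σ ℓ m L S (updB θ l i t)) ((θ l).2 i))) ∧
    (∀ l, q + 3 ≤ l → l ≤ L + 1 →
      (∀ i < m (l - 1), ∀ j < m (l - 2),
        deriv (fun t => empRisk σ ℓ (insertWidth m q mh) (L + 1) S (updW θ' l i j t))
            ((θ' l).1 i j)
          = deriv (fun t => empRisk σ ℓ m L S (updW θ (l - 1) i j t)) ((θ (l - 1)).1 i j)) ∧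
      (∀ i < m (l - 1),
        deriv (fun t => empRisk σ ℓ (insertWidth m q mh) (L + 1) S (updB θ' l i t))
            ((θ' l).2 i)
          = deriv (fun t => empRisk σ ℓ m L S (updB θ (l - 1) i t)) ((θ (l - 1)).2 i))) := by
  obtain ⟨lam, mu, aa, bb, hLoc, hAP, hOP⟩ := hθ'
  have haff : ∀ j < mh, AffineSubdomain σ (aa j) (bb j) (lam j) (mu j) :=
    fun j hj => (hAP j hj).1
  have hpre' : ∀ j < mh, ∀ i : Fin n,
      preAct σ (insertWidth m q mh) (L + 1) θ' (S i).1 (q + 1) j ∈ Set.Ioo (aa j) (bb j) :=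
    fun j hj i => (hAP j hj).2 i
  constructor
  · intro l hl1 hlq
    constructor
    · intro i hi j hj
      have hb : (θ' l).1 i j = (θ l).1 i j := (hLoc.1 l hl1 hlq).1 i hi j hj
      rw [hb]
      refine key_deriv σ hσ.continuous ℓ m L q mh hq hqL S θ' lam mu aa bb haff hpre'
        (fun t => updW θ' l i j t) (fun t => updW θ l i j t) ((θ l).1 i j)
        (updW_cont1 θ' l i j) (updW_cont2 θ' l i j) ?_ ?_ ?_ ?_
      · rw [← hb]; exact updW_base θ' l i j
      · intro t l' h1 h2
        by_cases hE : l' = l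
        · subst hE
          constructor
          · intro i' hi' j' hj'
            show (updW θ' l' i j t l').1 i' j' = (updW θ l' i j t l').1 i' j'
            unfold updW
            rw [if_pos rfl, if_pos rfl]
            dsimp only
            split
            · rfl
            · exact (hLoc.1 l' h1 h2).1 i' hi' j' hj'
          · intro i' hi'
            show (updW θ' l' i j t l').2 i' = (updW θ l' i j t l').2 i'
            unfold updW
            rw [if_pos rfl, if_pos rfl]
            exact (hLoc.1 l' h1 h2).2 i' hi'
        · rw [updW_ne θ' l i j t l' hE, updW_ne θ l i j t l' hE]
          exact hLoc.1 l' h1 h2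
      · intro t
        unfold OutputPres
        rw [updW_ne θ' l i j t (q + 1) (by omega), updW_ne θ' l i j t (q + 2) (by omega),
            updW_ne θ l i j t (q + 1) (by omega)]
        exact hOP
      · intro t l' h1 h2
        rw [updW_ne θ' l i j t l' (by omega), updW_ne θ l i j t (l' - 1) (by omega)]
        exact hLoc.2 l' h1 h2
    · intro i hi
      have hb : (θ' l).2 i = (θ l).2 i := (hLoc.1 l hl1 hlq).2 i hi
      rw [hb]
      refine key_deriv σ hσ.continuous ℓ m L q mh hq hqL S θ' lam mu aa bb haff hpre'
        (fun t => updB θ' l i t) (fun t => updB θ l i t) ((θ l).2 i)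
        (updB_cont1 θ' l i) (updB_cont2 θ' l i) ?_ ?_ ?_ ?_
      · rw [← hb]; exact updB_base θ' l i
      · intro t l' h1 h2
        by_cases hE : l' = l
        · subst hE
          constructor
          · intro i' hi' j' hj'
            show (updB θ' l' i t l').1 i' j' = (updB θ l' i t l').1 i' j'
            unfold updB
            rw [if_pos rfl, if_pos rfl]
            exact (hLoc.1 l' h1 h2).1 i' hi' j' hj'
          · intro i' hi'
            show (updB θ' l' i t l').2 i' = (updB θ l' i t l').2 i'
            unfold updB
            rw [if_pos rfl, if_pos rfl]
            dsimp only
            split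
            · rfl
            · exact (hLoc.1 l' h1 h2).2 i' hi'
        · rw [updB_ne θ' l i t l' hE, updB_ne θ l i t l' hE]
          exact hLoc.1 l' h1 h2
      · intro t
        unfold OutputPres
        rw [updB_ne θ' l i t (q + 1) (by omega), updB_ne θ' l i t (q + 2) (by omega),
            updB_ne θ l i t (q + 1) (by omega)]
        exact hOP
      · intro t l' h1 h2
        rw [updB_ne θ' l i t l' (by omega), updB_ne θ l i t (l' - 1) (by omega)]
        exact hLoc.2 l' h1 h2
  · intro l hl1 hl2
    constructor
    · intro i hi j hj
      have hb : (θ' l).1 i j = (θ (l - 1)).1 i j := (hLoc.2 l hl1 hl2).1 i hi j hj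
      rw [hb]
      refine key_deriv σ hσ.continuous ℓ m L q mh hq hqL S θ' lam mu aa bb haff hpre'
        (fun t => updW θ' l i j t) (fun t => updW θ (l - 1) i j t) ((θ (l - 1)).1 i j)
        (updW_cont1 θ' l i j) (updW_cont2 θ' l i j) ?_ ?_ ?_ ?_
      · rw [← hb]; exact updW_base θ' l i j
      · intro t l' h1 h2
        rw [updW_ne θ' l i j t l' (by omega), updW_ne θ (l - 1) i j t l' (by omega)]
        exact hLoc.1 l' h1 h2
      · intro t
        unfold OutputPres
        rw [updW_ne θ' l i j t (q + 1) (by omega), updW_ne θ' l i j t (q + 2) (by omega),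
            updW_ne θ (l - 1) i j t (q + 1) (by omega)]
        exact hOP
      · intro t l' h1 h2
        by_cases hE : l' = l
        · subst hE
          constructor
          · intro i' hi' j' hj'
            show (updW θ' l' i j t l').1 i' j'
              = (updW θ (l' - 1) i j t (l' - 1)).1 i' j'
            unfold updW
            rw [if_pos rfl, if_pos rfl]
            dsimp only
            split
            · rfl
            · exact (hLoc.2 l' h1 h2).1 i' hi' j' hj'
          · intro i' hi'
            show (updW θ' l' i j t l').2 i' = (updW θ (l' - 1) i j t (l' - 1)).2 i'
            unfold updW
            rw [if_pos rfl, if_pos rfl]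
            exact (hLoc.2 l' h1 h2).2 i' hi'
        · rw [updW_ne θ' l i j t l' hE, updW_ne θ (l - 1) i j t (l' - 1) (by omega)]
          exact hLoc.2 l' h1 h2
    · intro i hi
      have hb : (θ' l).2 i = (θ (l - 1)).2 i := (hLoc.2 l hl1 hl2).2 i hi
      rw [hb]
      refine key_deriv σ hσ.continuous ℓ m L q mh hq hqL S θ' lam mu aa bb haff hpre'
        (fun t => updB θ' l i t) (fun t => updB θ (l - 1) i t) ((θ (l - 1)).2 i)
        (updB_cont1 θ' l i) (updB_cont2 θ' l i) ?_ ?_ ?_ ?_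
      · rw [← hb]; exact updB_base θ' l i
      · intro t l' h1 h2
        rw [updB_ne θ' l i t l' (by omega), updB_ne θ (l - 1) i t l' (by omega)]
        exact hLoc.1 l' h1 h2
      · intro t
        unfold OutputPres
        rw [updB_ne θ' l i t (q + 1) (by omega), updB_ne θ' l i t (q + 2) (by omega),
            updB_ne θ (l - 1) i t (q + 1) (by omega)]
        exact hOP
      · intro t l' h1 h2
        by_cases hE : l' = l
        · subst hE
          constructor
          · intro i' hi' j' hj'
            show (updB θ' l' i t l').1 i' j' = (updB θ (l' - 1) i t (l' - 1)).1 i' j'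
            unfold updB
            rw [if_pos rfl, if_pos rfl]
            exact (hLoc.2 l' h1 h2).1 i' hi' j' hj'
          · intro i' hi'
            show (updB θ' l' i t l').2 i' = (updB θ (l' - 1) i t (l' - 1)).2 i'
            unfold updB
            rw [if_pos rfl, if_pos rfl]
            dsimp only
            split
            · rfl
            · exact (hLoc.2 l' h1 h2).2 i' hi'
        · rw [updB_ne θ' l i t l' hE, updB_ne θ (l - 1) i t (l' - 1) (by omega)]
          exact hLoc.2 l' h1 h2
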